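/- Let s ∈ ℂ and let A = (A_{r,j})_{(r,j)∈𝓘} be complex numbers. Suppose {f_{m,k}} and {f̃_{m,k}} are two scalar formal solutions of the N-th order equation Π_r (d/dt − i m_r)^{n_r} y = ε V(ε, e^{±it}, y, y′, …, y^{(N−1)}) such that (ii) their ε⁰ parts equal the unperturbed solution, i.e. f_{m,0} = f̃_{m,0} = Σ_r δ_{m,m_r} h_r(t, A_r) with h_r(t,A_r) = Σ_{j=1}^{n_r} A_{r,j} t^{j−1}/(j−1)!, and (iii) for every (r,j) ∈ 𝓘 and every k ≥ 0, (d^{j−1}/dt^{j−1} f_{m_r,k})(s) = (d^{j−1}/dt^{j−1} f̃_{m_r,k})(s). Then the two formal solutions coincide: f_{m,k} = f̃_{m,k} for all m, k. -/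

import Mathlib

/-!
Subtracting the two solutions, the order-`k` coefficient of the right-hand side `ε V(…)` only
involves orders `< k`, so by strong induction on `k` the difference `g = f_{m,k} - f̃_{m,k}`
satisfies `Π_r (d/dt + i(m - m_r))^{n_r} g = 0` in every mode `m`. On `ℂ[t]` an operator
`Q(d/dt)` with `Q(0) ≠ 0` is injective (it preserves leading coefficients up to `Q(0)`), so for
non-resonant `m` this gives `g = 0`, while for `m = m_r` it gives `g^{(n_r)} = 0`; then `g` is a
polynomial of degree `< n_r` whose derivatives of order `< n_r` vanish at `s`, hence `g = 0`.
-/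

noncomputable section

open Polynomial

/-- Finite `ℂ[t]`-linear combinations of Fourier modes `e^{i m t}` (`m : ℤ`):
the mode-`m` coefficient of `x` is the polynomial `x m`. -/
abbrev FourierPoly : Type := AddMonoidAlgebra (Polynomial ℂ) ℤ

/-- Formal power series in `ε` whose coefficients are finite Fourier sums with
polynomial-in-`t` coefficients. -/
abbrev FSeries : Type := PowerSeries FourierPoly

/-- The mode `e^{i t}`, as a unit of `FSeries` (inverse `e^{-i t}`). -/
def zUnit : FSeriesˣ where
  val := PowerSeries.C (AddMonoidAlgebra.single 1 1)
  inv := PowerSeries.C (AddMonoidAlgebra.single (-1) 1)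
  val_inv := by
    rw [← map_mul, AddMonoidAlgebra.single_mul_single]
    norm_num [AddMonoidAlgebra.one_def]
  inv_val := by
    rw [← map_mul, AddMonoidAlgebra.single_mul_single]
    norm_num [AddMonoidAlgebra.one_def]

/-- Evaluation of a Laurent polynomial in `z` (an element of `ℂ[z,z⁻¹] = AddMonoidAlgebra ℂ ℤ`)
at `z = e^{i t}`, landing in `FSeries`. -/
def zEval : AddMonoidAlgebra ℂ ℤ →+* FSeries :=
  AddMonoidAlgebra.liftNCRingHom
    (PowerSeries.C.comp (AddMonoidAlgebra.singleZeroRingHom.comp (Polynomial.C : ℂ →+* Polynomial ℂ)))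
    ((Units.coeHom _).comp (zpowersHom _ zUnit))
    (fun _ _ => Commute.all _ _)

/-- Evaluation of `V ∈ ℂ[ε, z, z⁻¹, y₁, …, yₙ]` (encoded as a polynomial in the `y`-variables
with coefficients in `ℂ[z,z⁻¹][ε]`) at `z = e^{i t}`, `ε = ε` (the power series variable)
and given formal series values of the `y`-variables. -/
def VEval {n : ℕ} (V : MvPolynomial (Fin n) (Polynomial (AddMonoidAlgebra ℂ ℤ)))
    (y : Fin n → FSeries) : FSeries :=
  MvPolynomial.eval₂ (Polynomial.eval₂RingHom zEval PowerSeries.X) y V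

/-- The mode-by-mode derivative `d/dt` on finite Fourier sums:
`p(t) e^{imt} ↦ (p'(t) + i m p(t)) e^{imt}`. -/
def modeDeriv (x : FourierPoly) : FourierPoly :=
  Finsupp.sum x.coeff fun m p =>
    AddMonoidAlgebra.single m (derivative p + Polynomial.C (Complex.I * (m : ℂ)) * p)

/-- The derivative `d/dt`, acting coefficientwise in `ε` on `FSeries`. -/
def seriesDeriv (y : FSeries) : FSeries :=
  PowerSeries.mk fun k => modeDeriv (PowerSeries.coeff k y)

/-- The operator `d/dt + c` on `ℂ[t]`. -/
def shiftedDeriv (c : ℂ) : Module.End ℂ (Polynomial ℂ) :=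
  (Polynomial.derivative : Polynomial ℂ →ₗ[ℂ] Polynomial ℂ) + c • 1

/-- The operator `Π_{r=1}^{d} (d/dt + i(m - m_r))^{n_r}` on `ℂ[t]`. -/
def opProd {d : ℕ} (mr : Fin d → ℤ) (nv : Fin d → ℕ) (m : ℤ) :
    Module.End ℂ (Polynomial ℂ) :=
  (List.ofFn fun r : Fin d => shiftedDeriv (Complex.I * ((m : ℂ) - (mr r : ℂ))) ^ nv r).prod

/-- `F` encodes a scalar formal solution `y(ε,t) = Σ_k ε^k Σ_m f_{m,k}(t) e^{imt}` of the
`N`-th order equation `Π_r (d/dt - i m_r)^{n_r} y = ε V(ε, e^{±it}, y, y', …, y^{(N-1)})`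
(`N = n_1 + ⋯ + n_d`): order by order in `ε` and mode by mode in `e^{imt}`,
`Π_r (d/dt + i(m - m_r))^{n_r} f_{m,k} = [ε V(ε, e^{±it}, y, y', …, y^{(N-1)})]_{ε^k e^{imt}}`.
(Finiteness of the support in `m` at each order is built into `FourierPoly`.) -/
def IsScalarFormalSolution {d : ℕ} (mr : Fin d → ℤ) (nv : Fin d → ℕ)
    (V : MvPolynomial (Fin (∑ r, nv r)) (Polynomial (AddMonoidAlgebra ℂ ℤ)))
    (F : ℕ → FourierPoly) : Prop :=
  ∀ (k : ℕ) (m : ℤ),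
    opProd mr nv m ((F k).coeff m)
      = (PowerSeries.coeff k (PowerSeries.X *
          VEval V (fun l => seriesDeriv^[(l : ℕ)] (PowerSeries.mk fun k' => F k')))).coeff m

/-- `h_r(t, A_r) = Σ_{j=1}^{n_r} A_{r,j} t^{j-1}/(j-1)!` (here `0`-indexed:
`h_r = Σ_{j : Fin (n_r)} A_{r,j} t^j / j!`). -/
def hPoly {d : ℕ} (nv : Fin d → ℕ) (A : (r : Fin d) → Fin (nv r) → ℂ) (r : Fin d) :
    Polynomial ℂ :=
  ∑ j : Fin (nv r), Polynomial.C (A r j * (1 / ((j : ℕ).factorial : ℂ)))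
    * Polynomial.X ^ (j : ℕ)

namespace Polynomial

variable {R : Type*}

lemma eq_zero_of_iterate_derivative_eq_zero [CommSemiring R] [IsAddTorsionFree R]
    {p : R[X]} {s : R} {n : ℕ} (hn : derivative^[n] p = 0)
    (hs : ∀ j < n, (derivative^[j] p).eval s = 0) : p = 0 := by
  induction n generalizing p with
  | zero => exact hn
  | succ n ih =>
    have hp' : derivative p = 0 :=
      ih (by rwa [← Function.iterate_succ_apply])
        fun j hj => by rw [← Function.iterate_succ_apply]; exact hs (j + 1) (by omega)
    have hC := eq_C_of_derivative_eq_zero hp'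
    have h0 := hs 0 n.succ_pos
    rw [Function.iterate_zero_apply, hC, eval_C] at h0
    rw [hC, h0, C_0]

lemma coeff_aeval_derivative_natDegree [CommSemiring R] (Q p : R[X]) :
    (aeval (derivative : Module.End R R[X]) Q p).coeff p.natDegree
      = Q.coeff 0 * p.leadingCoeff := by
  have hsum : aeval (derivative : Module.End R R[X]) Q p
      = ∑ i ∈ Finset.range (Q.natDegree + 1), Q.coeff i • derivative^[i] p := by
    rw [aeval_eq_sum_range, LinearMap.sum_apply]
    refine Finset.sum_congr rfl fun i _ => ?_
    rw [LinearMap.smul_apply, Module.End.pow_apply]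
  rw [hsum, finsetSum_coeff, Finset.sum_eq_single_of_mem 0 (by simp)]
  · rw [Function.iterate_zero_apply, coeff_smul, smul_eq_mul, leadingCoeff]
  · intro i _ hi
    obtain ⟨j, rfl⟩ : ∃ j, i = j + 1 := ⟨i - 1, by omega⟩
    have hdeg : (derivative^[j] p).natDegree < p.natDegree + 1 :=
      (natDegree_iterate_derivative p j).trans_lt (by omega)
    rw [coeff_smul, Function.iterate_succ_apply', coeff_derivative,
      coeff_eq_zero_of_natDegree_lt hdeg, zero_mul, smul_zero]

lemma aeval_derivative_injective [CommRing R] [IsDomain R] {Q : R[X]} (hQ : Q.coeff 0 ≠ 0) :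
    Function.Injective (aeval (derivative : Module.End R R[X]) Q) := by
  refine (injective_iff_map_eq_zero _).mpr fun p hp => ?_
  by_contra hp0
  have := coeff_aeval_derivative_natDegree Q p
  rw [hp, coeff_zero] at this
  exact mul_ne_zero hQ (leadingCoeff_ne_zero.mpr hp0) this.symm

lemma eq_zero_of_aeval_derivative_eq_zero [CommRing R] [IsDomain R] [CharZero R]
    {P p : R[X]} {n : ℕ} {s : R} (hP : P.coeff 0 ≠ 0)
    (hp : aeval (derivative : Module.End R R[X]) (X ^ n * P) p = 0)
    (hs : ∀ j < n, (derivative^[j] p).eval s = 0) : p = 0 := by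
  refine eq_zero_of_iterate_derivative_eq_zero (n := n) ?_ hs
  refine aeval_derivative_injective hP ?_
  rw [map_zero, ← hp, mul_comm, map_mul, Module.End.mul_apply, aeval_X_pow, Module.End.pow_apply]

end Polynomial

section ScalarEquation

variable {d : ℕ} (mr : Fin d → ℤ) (nv : Fin d → ℕ)

def opProdSymbol (m : ℤ) : ℂ[X] :=
  ∏ r, (X + C (Complex.I * ((m : ℂ) - (mr r : ℂ)))) ^ nv r

lemma shiftedDeriv_eq_aeval (c : ℂ) :
    shiftedDeriv c = aeval (derivative : Module.End ℂ ℂ[X]) (X + C c) := by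
  rw [shiftedDeriv, map_add, aeval_X, aeval_C, Module.algebraMap_end_eq_smul_id]
  rfl

lemma opProd_eq_aeval (m : ℤ) :
    opProd mr nv m = aeval (derivative : Module.End ℂ ℂ[X]) (opProdSymbol mr nv m) := by
  rw [opProd, opProdSymbol, ← Fin.prod_ofFn, map_list_prod, List.map_ofFn]
  refine congrArg _ (congrArg List.ofFn (funext fun r => ?_))
  rw [Function.comp_apply, map_pow, shiftedDeriv_eq_aeval]

lemma coeff_zero_prod_ne_zero_of_nonresonant {m : ℤ} {S : Finset (Fin d)}
    (hS : ∀ r ∈ S, mr r ≠ m) :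
    (∏ r ∈ S, (X + C (Complex.I * ((m : ℂ) - (mr r : ℂ)))) ^ nv r).coeff 0 ≠ 0 := by
  rw [coeff_zero_eq_eval_zero, eval_prod]
  refine Finset.prod_ne_zero_iff.mpr fun r hr => ?_
  simp only [eval_pow, eval_add, eval_X, eval_C, zero_add]
  refine pow_ne_zero _ (mul_ne_zero Complex.I_ne_zero (sub_ne_zero.mpr ?_))
  exact_mod_cast (hS r hr).symm

variable {mr nv}

lemma eq_zero_of_opProd_eq_zero (hmr : Function.Injective mr) {m : ℤ} (s : ℂ) {g : ℂ[X]}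
    (hg : opProd mr nv m g = 0)
    (hs : ∀ r, mr r = m → ∀ j < nv r, (derivative^[j] g).eval s = 0) : g = 0 := by
  rw [opProd_eq_aeval, opProdSymbol] at hg
  by_cases hres : ∃ r, mr r = m
  · obtain ⟨r₀, rfl⟩ := hres
    rw [← Finset.mul_prod_erase _ _ (Finset.mem_univ r₀), sub_self, mul_zero, map_zero,
      add_zero] at hg
    have hnonres : ∀ r ∈ Finset.univ.erase r₀, mr r ≠ mr r₀ :=
      fun r hr h => (Finset.mem_erase.mp hr).1 (hmr h)
    exact eq_zero_of_aeval_derivative_eq_zero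
      (coeff_zero_prod_ne_zero_of_nonresonant mr nv hnonres) hg (hs r₀ rfl)
  · simp only [not_exists] at hres
    rw [← one_mul (∏ r, _), ← pow_zero X] at hg
    exact eq_zero_of_aeval_derivative_eq_zero (s := s)
      (coeff_zero_prod_ne_zero_of_nonresonant mr nv fun r _ => hres r) hg nofun

end ScalarEquation

lemma MvPolynomial.eval₂_sub_eval₂_mem {R S σ : Type*} [CommSemiring R] [CommRing S]
    {I : Ideal S} (f : R →+* S) {y y' : σ → S} (h : ∀ i, y i - y' i ∈ I)
    (p : MvPolynomial σ R) : p.eval₂ f y - p.eval₂ f y' ∈ I := by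
  rw [← Ideal.Quotient.eq, eval₂_comp_left, eval₂_comp_left]
  congr 1
  funext i
  exact Ideal.Quotient.eq.mpr (h i)

lemma coeff_iterate_seriesDeriv (l j : ℕ) (y : FSeries) :
    PowerSeries.coeff j (seriesDeriv^[l] y) = modeDeriv^[l] (PowerSeries.coeff j y) :=
  (Function.Semiconj.iterate_right (fun _ => PowerSeries.coeff_mk _ _) l) y

lemma coeff_X_mul_VEval_congr {n : ℕ} (V : MvPolynomial (Fin n) (AddMonoidAlgebra ℂ ℤ)[X])
    {F F' : ℕ → FourierPoly} {k : ℕ} (h : ∀ j < k, F j = F' j) :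
    PowerSeries.coeff k (PowerSeries.X *
        VEval V (fun l => seriesDeriv^[(l : ℕ)] (PowerSeries.mk F)))
      = PowerSeries.coeff k (PowerSeries.X *
        VEval V (fun l => seriesDeriv^[(l : ℕ)] (PowerSeries.mk F'))) := by
  cases k with
  | zero => simp
  | succ k =>
    rw [PowerSeries.coeff_succ_X_mul, PowerSeries.coeff_succ_X_mul, ← sub_eq_zero, ← map_sub]
    refine PowerSeries.X_pow_dvd_iff.mp (Ideal.mem_span_singleton.mp ?_) k k.lt_succ_self
    refine MvPolynomial.eval₂_sub_eval₂_mem _ (fun l => ?_) V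
    refine Ideal.mem_span_singleton.mpr (PowerSeries.X_pow_dvd_iff.mpr fun j hj => ?_)
    rw [map_sub, coeff_iterate_seriesDeriv, coeff_iterate_seriesDeriv, PowerSeries.coeff_mk,
      PowerSeries.coeff_mk, h j hj, sub_self]

theorem scalar_uniqueness_general {d : ℕ} (mr : Fin d → ℤ)
    (hmr : Function.Injective mr) (nv : Fin d → ℕ)
    (V : MvPolynomial (Fin (∑ r, nv r)) (Polynomial (AddMonoidAlgebra ℂ ℤ)))
    (s : ℂ)
    (F F' : ℕ → FourierPoly)
    (hsol : IsScalarFormalSolution mr nv V F) (hsol' : IsScalarFormalSolution mr nv V F')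
    (hres : ∀ (r : Fin d) (j : Fin (nv r)) (k : ℕ),
      ((fun p => derivative p)^[(j : ℕ)] ((F k).coeff (mr r))).eval s
        = ((fun p => derivative p)^[(j : ℕ)] ((F' k).coeff (mr r))).eval s) :
    F = F' := by
  funext k
  induction k using Nat.strong_induction_on with
  | _ k ih =>
    refine AddMonoidAlgebra.ext (Finsupp.ext fun m => sub_eq_zero.mp ?_)
    have hop : opProd mr nv m ((F k).coeff m - (F' k).coeff m) = 0 := by
      rw [map_sub, hsol k m, hsol' k m, coeff_X_mul_VEval_congr V ih, sub_self]
    refine eq_zero_of_opProd_eq_zero hmr s hop fun r hr j hj => ?_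
    subst hr
    rw [iterate_derivative_sub, eval_sub, sub_eq_zero]
    exact hres r ⟨j, hj⟩ k

/-- uniqueness of the naive perturbative solution, scalar `N`-th order case:
two scalar formal solutions of `Π_r (d/dt - i m_r)^{n_r} y = ε V(ε,e^{±it},y,…,y^{(N-1)})`
whose `ε⁰` parts both equal the unperturbed solution `Σ_r δ_{m,m_r} h_r(t,A_r)` and whose
derivatives `d^{j-1}/dt^{j-1}` of the resonant coefficients agree at `t = s` for all
`(r,j) ∈ 𝓘` coincide. -/
theorem scalar_uniqueness {d : ℕ} (hd : 0 < d) (mr : Fin d → ℤ)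
    (hmr : Function.Injective mr) (nv : Fin d → ℕ) (hnv : ∀ r, 0 < nv r)
    (V : MvPolynomial (Fin (∑ r, nv r)) (Polynomial (AddMonoidAlgebra ℂ ℤ)))
    (s : ℂ) (A : (r : Fin d) → Fin (nv r) → ℂ)
    (F F' : ℕ → FourierPoly)
    (hsol : IsScalarFormalSolution mr nv V F) (hsol' : IsScalarFormalSolution mr nv V F')
    (hinit : F 0 = ∑ r : Fin d, AddMonoidAlgebra.single (mr r) (hPoly nv A r))
    (hinit' : F' 0 = ∑ r : Fin d, AddMonoidAlgebra.single (mr r) (hPoly nv A r))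
    (hres : ∀ (r : Fin d) (j : Fin (nv r)) (k : ℕ),
      ((fun p => derivative p)^[(j : ℕ)] ((F k).coeff (mr r))).eval s
        = ((fun p => derivative p)^[(j : ℕ)] ((F' k).coeff (mr r))).eval s) :
    F = F' :=
  scalar_uniqueness_general mr hmr nv V s F F' hsol hsol' hres

end
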